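/- arXiv:1401.4634 — 2 statements merged into one kernel-verified Lean document; each statement's English description precedes it below -/
import Mathlib

section
/- The capacity of the regular language S = ((0^k 1)^+ (0^{k-1} 1)^+)^+ over {0,1} equals log₂ r, where r > 1 is the largest real root of x^{k+1} − x − 1 (equivalently, the largest real solution of x^{−(k+1)} + x^{−k} = 1). -/
open Filter

noncomputable def cap {A : Type*} (S : Set (List A)) : ℝ :=
  Filter.limsup
    (fun n : ℕ => Real.logb 2 (({x ∈ S | x.length = n} : Set (List A)).ncard) / n)
    Filter.atTop

def Sys {A : Type*} (step : List A → List A → Prop) (s : List A) : Set (List A) :=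
  {y | Relation.ReflTransGen step s y}

def cat (X Y : Set (List Bool)) : Set (List Bool) :=
  {x | ∃ a ∈ X, ∃ b ∈ Y, x = a ++ b}

def pos (X : Set (List Bool)) : Set (List Bool) :=
  {x | ∃ l : List (List Bool), l ≠ [] ∧ (∀ w ∈ l, w ∈ X) ∧ x = l.flatten}

/-!
Put `a = 0^(j+1) 1` and `b = 0^j 1` (so `k = j + 1`). These words differ at position `j`, so
`{a, b}` is a prefix code and the number `d n` of words of length `n` in `{a, b}*` satisfies
`d n = d (n - (j + 2)) + d (n - (j + 1))`; with `r ^ (j + 2) = r + 1` this gives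
`c r ^ n ≤ d n ≤ r ^ n` for large `n`. Every word of the language lies in `{a, b}*`, and conversely
`a t b` lies in it for every `t ∈ {a, b}*`, so its words of length `n` number between
`d (n - (2 j + 3))` and `d n`, and the capacity is `log₂ r`.
-/

lemma mem_pos_of_mem {X : Set (List Bool)} {w : List Bool} (h : w ∈ X) : w ∈ pos X :=
  ⟨[w], by simp, by simpa, by simp⟩

lemma append_mem_pos {X : Set (List Bool)} {x y : List Bool}
    (hx : x ∈ pos X) (hy : y ∈ pos X) : x ++ y ∈ pos X := by
  obtain ⟨l₁, hl₁, hX₁, rfl⟩ := hx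
  obtain ⟨l₂, -, hX₂, rfl⟩ := hy
  refine ⟨l₁ ++ l₂, by simp [hl₁], fun w hw => ?_, by simp⟩
  rcases List.mem_append.mp hw with hw | hw
  exacts [hX₁ w hw, hX₂ w hw]

lemma pos_induction {X : Set (List Bool)} {P : List Bool → Prop} (hnil : P [])
    (happend : ∀ x y, x ∈ X → P y → P (x ++ y)) {x : List Bool} (hx : x ∈ pos X) : P x := by
  obtain ⟨l, -, hX, rfl⟩ := hx
  induction l with
  | nil => exact hnil
  | cons w l ih =>
    exact happend w _ (hX w (by simp)) (ih fun v hv => hX v (by simp [hv]))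

def wordA (j : ℕ) : List Bool := List.replicate (j + 1) false ++ [true]

def wordB (j : ℕ) : List Bool := List.replicate j false ++ [true]

@[simp] lemma length_wordA (j : ℕ) : (wordA j).length = j + 2 := by simp [wordA]

@[simp] lemma length_wordB (j : ℕ) : (wordB j).length = j + 1 := by simp [wordB]

lemma wordA_append_ne_wordB_append (j : ℕ) (u v : List Bool) : wordA j ++ u ≠ wordB j ++ v := by
  intro h
  have := congrArg (·[j]?) h
  simp [wordA, wordB, List.getElem?_append_left] at this

def runLang (j : ℕ) : Set (List Bool) := cat (pos {wordA j}) (pos {wordB j})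

def blockLang (j : ℕ) : Set (List Bool) := pos (runLang j)

inductive IsBlockWord (j : ℕ) : List Bool → Prop
  | nil : IsBlockWord j []
  | consA {x : List Bool} : IsBlockWord j x → IsBlockWord j (wordA j ++ x)
  | consB {x : List Bool} : IsBlockWord j x → IsBlockWord j (wordB j ++ x)

namespace IsBlockWord

variable {j : ℕ}

lemma append {x y : List Bool} (hx : IsBlockWord j x) (hy : IsBlockWord j y) :
    IsBlockWord j (x ++ y) := by
  induction hx with
  | nil => exact hy
  | consA _ ih => simpa using ih.consA
  | consB _ ih => simpa using ih.consB

lemma of_mem_pos {X : Set (List Bool)} (hX : ∀ w ∈ X, IsBlockWord j w) {x : List Bool}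
    (hx : x ∈ pos X) : IsBlockWord j x :=
  pos_induction nil (fun _ _ hw hy => (hX _ hw).append hy) hx

lemma of_mem_blockLang {x : List Bool} (hx : x ∈ blockLang j) : IsBlockWord j x := by
  refine of_mem_pos ?_ hx
  rintro _ ⟨a, ha, b, hb, rfl⟩
  refine (of_mem_pos ?_ ha).append (of_mem_pos ?_ hb) <;> rintro w rfl
  exacts [by simpa using nil.consA, by simpa using nil.consB]

end IsBlockWord

lemma append_wordB_mem {j : ℕ} {y : List Bool}
    (hy : y ∈ pos {wordA j} ∪ runLang j) :
    y ++ wordB j ∈ runLang j := by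
  rcases hy with hy | ⟨a, ha, b, hb, rfl⟩
  · exact ⟨y, hy, wordB j, mem_pos_of_mem rfl, rfl⟩
  · exact ⟨a, ha, b ++ wordB j, append_mem_pos hb (mem_pos_of_mem rfl), by simp⟩

/-- Cutting `y ++ t ++ b` into maximal runs `a⁺b⁺`, the prefix `y` read so far is a sequence of
complete runs or a run of `a`s. -/
lemma append_append_wordB_mem_blockLang {j : ℕ} {t : List Bool} (ht : IsBlockWord j t) :
    ∀ y ∈ pos {wordA j} ∪ runLang j,
      y ++ t ++ wordB j ∈ blockLang j := by
  induction ht with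
  | nil =>
    intro y hy
    simpa [blockLang] using mem_pos_of_mem (append_wordB_mem hy)
  | @consA t _ ih =>
    rintro y (hy | hy)
    · simpa using ih (y ++ wordA j) (Or.inl (append_mem_pos hy (mem_pos_of_mem rfl)))
    · simpa [blockLang] using append_mem_pos (mem_pos_of_mem hy)
        (ih (wordA j) (Or.inl (mem_pos_of_mem rfl)))
  | @consB t _ ih =>
    intro y hy
    simpa using ih (y ++ wordB j) (Or.inr (append_wordB_mem hy))

def blockWords (j n : ℕ) : Set (List Bool) := {x | IsBlockWord j x ∧ x.length = n}

lemma blockWords_finite (j n : ℕ) : (blockWords j n).Finite :=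
  (List.finite_length_eq Bool n).subset fun _ hx => hx.2

lemma blockWords_eq_union {j n : ℕ} (hn : j + 2 ≤ n) :
    blockWords j n = (wordA j ++ ·) '' blockWords j (n - (j + 2)) ∪
      (wordB j ++ ·) '' blockWords j (n - (j + 1)) := by
  ext x
  constructor
  · rintro ⟨hx, rfl⟩
    cases hx with
    | nil => simp at hn
    | @consA y hy => exact Or.inl ⟨y, ⟨hy, by simp⟩, rfl⟩
    | @consB y hy => exact Or.inr ⟨y, ⟨hy, by simp⟩, rfl⟩
  · rintro (⟨y, ⟨hy, hl⟩, rfl⟩ | ⟨y, ⟨hy, hl⟩, rfl⟩)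
    · exact ⟨hy.consA, by simp only [List.length_append, length_wordA]; omega⟩
    · exact ⟨hy.consB, by simp only [List.length_append, length_wordB]; omega⟩

lemma ncard_blockWords_eq_add {j n : ℕ} (hn : j + 2 ≤ n) :
    (blockWords j n).ncard =
      (blockWords j (n - (j + 2))).ncard + (blockWords j (n - (j + 1))).ncard := by
  have hdisj : Disjoint ((wordA j ++ ·) '' blockWords j (n - (j + 2)))
      ((wordB j ++ ·) '' blockWords j (n - (j + 1))) := by
    rw [Set.disjoint_left]
    rintro _ ⟨u, -, rfl⟩ ⟨v, -, h⟩
    exact wordA_append_ne_wordB_append j u v h.symm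
  rw [blockWords_eq_union hn, Set.ncard_union_eq hdisj ((blockWords_finite _ _).image _)
      ((blockWords_finite _ _).image _),
    Set.ncard_image_of_injective _ fun _ _ => List.append_cancel_left,
    Set.ncard_image_of_injective _ fun _ _ => List.append_cancel_left]

lemma ncard_blockWords_le_one {j n : ℕ} (hn : n < j + 2) : (blockWords j n).ncard ≤ 1 := by
  rw [Set.ncard_le_one_iff (blockWords_finite j n)]
  have short : ∀ {x}, x ∈ blockWords j n → x = [] ∨ x = wordB j := by
    rintro x ⟨hx, rfl⟩
    cases hx with
    | nil => exact Or.inl rfl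
    | consA => simp only [List.length_append, length_wordA] at hn; omega
    | @consB y hy =>
      cases hy with
      | nil => simp
      | consA => simp only [List.length_append, length_wordA, length_wordB] at hn; omega
      | consB => simp only [List.length_append, length_wordB] at hn; omega
  intro x y hx hy
  have hlx := hx.2
  have hly := hy.2
  rcases short hx with rfl | rfl <;> rcases short hy with rfl | rfl <;>
    simp only [List.length_nil, length_wordB] at hlx hly <;> first | rfl | omega

lemma blockWords_nonempty {j n : ℕ} (hn : j * (j + 1) ≤ n) : (blockWords j n).Nonempty := by
  have hrep : ∀ x y, (blockWords j (x * (j + 1) + y * (j + 2))).Nonempty := by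
    intro x y
    induction x with
    | zero =>
      induction y with
      | zero => exact ⟨[], .nil, by simp⟩
      | succ y ih =>
        obtain ⟨w, hw, hl⟩ := ih
        exact ⟨wordA j ++ w, hw.consA, by rw [List.length_append, length_wordA, hl]; ring⟩
    | succ x ih =>
      obtain ⟨w, hw, hl⟩ := ih
      exact ⟨wordB j ++ w, hw.consB, by rw [List.length_append, length_wordB, hl]; ring⟩
  -- Frobenius for the coprime parts `j + 1`, `j + 2`: write `n = q (j + 1) + s` with `s ≤ j ≤ q`.
  obtain ⟨q, s, hs, rfl⟩ : ∃ q s, s < j + 1 ∧ n = q * (j + 1) + s :=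
    ⟨n / (j + 1), n % (j + 1), Nat.mod_lt _ j.succ_pos, (Nat.div_add_mod' n (j + 1)).symm⟩
  obtain ⟨x, rfl⟩ : ∃ x, q = s + x := Nat.exists_eq_add_of_le (by nlinarith)
  convert hrep x s using 2
  ring

lemma pow_eq_pow_sub_add_pow_sub {r : ℝ} {j n : ℕ} (hr : r ^ (j + 2) = r + 1) (hn : j + 2 ≤ n) :
    r ^ n = r ^ (n - (j + 2)) + r ^ (n - (j + 1)) := by
  obtain ⟨m, rfl⟩ := Nat.exists_eq_add_of_le hn
  rw [show j + 2 + m - (j + 2) = m by omega, show j + 2 + m - (j + 1) = m + 1 by omega,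
    pow_add, hr]
  ring

lemma le_mul_pow_of_le_add {f : ℕ → ℝ} {r C : ℝ} {j N : ℕ} (hr : r ^ (j + 2) = r + 1)
    (hrec : ∀ n, N + (j + 2) ≤ n → f n ≤ f (n - (j + 2)) + f (n - (j + 1)))
    (hwin : ∀ n, N ≤ n → n < N + (j + 2) → f n ≤ C * r ^ n) :
    ∀ n, N ≤ n → f n ≤ C * r ^ n := by
  intro n
  induction n using Nat.strong_induction_on with
  | _ n ih =>
    intro hN
    rcases lt_or_ge n (N + (j + 2)) with hn | hn
    · exact hwin n hN hn
    calc f n ≤ f (n - (j + 2)) + f (n - (j + 1)) := hrec n hn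
      _ ≤ C * r ^ (n - (j + 2)) + C * r ^ (n - (j + 1)) :=
        add_le_add (ih _ (by omega) (by omega)) (ih _ (by omega) (by omega))
      _ = C * r ^ n := by rw [pow_eq_pow_sub_add_pow_sub (n := n) hr (by omega)]; ring

lemma one_lt_of_forall_root_le {j : ℕ} {r : ℝ} (hmax : ∀ t : ℝ, t ^ (j + 2) - t - 1 = 0 → t ≤ r) :
    1 < r := by
  have hcont : ContinuousOn (fun t : ℝ => t ^ (j + 2) - t - 1) (Set.Icc 1 2) := by fun_prop
  have h2 : (0 : ℝ) ≤ 2 ^ (j + 2) - 2 - 1 := by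
    have : (2 : ℝ) ^ 2 ≤ 2 ^ (j + 2) := pow_le_pow_right₀ (by norm_num) (by omega)
    linarith
  obtain ⟨t, ht, hroot⟩ := intermediate_value_Icc (by norm_num : (1 : ℝ) ≤ 2) hcont
    ⟨by norm_num, h2⟩
  have ht1 : t ≠ 1 := by rintro rfl; norm_num at hroot
  exact (lt_of_le_of_ne ht.1 ht1.symm).trans_le (hmax t hroot)

lemma tendsto_logb_div_of_le_of_le {f : ℕ → ℝ} {b r A B : ℝ} (hb : 1 < b) (hr : 0 < r)
    (hA : 0 < A) (hbounds : ∀ᶠ n in atTop, A * r ^ n ≤ f n ∧ f n ≤ B * r ^ n) :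
    Tendsto (fun n : ℕ => Real.logb b (f n) / n) atTop (nhds (Real.logb b r)) := by
  have hlim : ∀ c : ℝ, Tendsto (fun n : ℕ => (c + n * Real.logb b r) / n) atTop
      (nhds (Real.logb b r)) := by
    intro c
    have := (tendsto_const_div_atTop_nhds_zero_nat c).add_const (Real.logb b r)
    rw [zero_add] at this
    refine this.congr' ?_
    filter_upwards [eventually_ne_atTop 0] with n hn
    field_simp
  refine tendsto_of_tendsto_of_tendsto_of_le_of_le' (hlim (Real.logb b A)) (hlim (Real.logb b B))
    ?_ ?_
  all_goals
    filter_upwards [hbounds, eventually_gt_atTop 0] with n ⟨hlo, hhi⟩ hn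
    have hArn : 0 < A * r ^ n := by positivity
    have hBrn : 0 < B * r ^ n := hArn.trans_le (hlo.trans hhi)
    gcongr
  · rw [← Real.logb_pow, ← Real.logb_mul hA.ne' (by positivity)]
    exact Real.logb_le_logb_of_le hb hArn hlo
  · rw [← Real.logb_pow, ← Real.logb_mul (pos_of_mul_pos_left hBrn (by positivity)).ne'
      (by positivity)]
    exact Real.logb_le_logb_of_le hb (hArn.trans_le hlo) hhi

section Growth

variable {j : ℕ} {r : ℝ}

lemma ncard_blockWords_le_pow (hr1 : 1 ≤ r) (hr : r ^ (j + 2) = r + 1) (n : ℕ) :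
    ((blockWords j n).ncard : ℝ) ≤ r ^ n := by
  simpa using le_mul_pow_of_le_add (f := fun n => ((blockWords j n).ncard : ℝ)) (C := 1) (N := 0)
    hr (fun n hn => by
      rw [ncard_blockWords_eq_add (by omega : j + 2 ≤ n), Nat.cast_add])
    (fun n _ hn => by
      simpa using (Nat.cast_le_one.mpr (ncard_blockWords_le_one hn)).trans (one_le_pow₀ hr1))
    n (Nat.zero_le n)

/-- Every length from `j (j + 1)` on is attained, so the lower bound holds on the first window;
it propagates through the recursion by the one-sided bound applied to `-ncard`. -/
lemma pow_div_le_ncard_blockWords (hr1 : 1 ≤ r) (hr : r ^ (j + 2) = r + 1) {n : ℕ}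
    (hn : j * (j + 1) ≤ n) :
    r ^ n / r ^ (j * (j + 1) + j + 1) ≤ (blockWords j n).ncard := by
  have key := le_mul_pow_of_le_add (f := fun n => -((blockWords j n).ncard : ℝ))
    (C := -(r ^ (j * (j + 1) + j + 1))⁻¹) (N := j * (j + 1)) hr
    (fun n hn => by
      rw [ncard_blockWords_eq_add (by omega : j + 2 ≤ n), Nat.cast_add, neg_add])
    (fun n hN hn => by
      have h1 : (1 : ℝ) ≤ (blockWords j n).ncard := by
        exact_mod_cast (blockWords_nonempty hN).ncard_pos (blockWords_finite j n)
      have h2 : r ^ n ≤ r ^ (j * (j + 1) + j + 1) := pow_le_pow_right₀ hr1 (by omega)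
      have h3 : r ^ n / r ^ (j * (j + 1) + j + 1) ≤ 1 :=
        div_le_one_of_le₀ h2 (by positivity)
      simp only [neg_mul, neg_le_neg_iff, ← div_eq_inv_mul]
      linarith)
    n hn
  simp only [neg_mul, neg_le_neg_iff, ← div_eq_inv_mul] at key
  exact key

end Growth

lemma blockLang_slice_subset (j n : ℕ) :
    {x ∈ blockLang j | x.length = n} ⊆ blockWords j n :=
  fun _ ⟨hx, hl⟩ => ⟨IsBlockWord.of_mem_blockLang hx, hl⟩

lemma image_blockWords_subset_blockLang_slice {j n : ℕ} (hn : 2 * j + 3 ≤ n) :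
    (fun t => wordA j ++ t ++ wordB j) '' blockWords j (n - (2 * j + 3)) ⊆
      {x ∈ blockLang j | x.length = n} := by
  rintro _ ⟨t, ⟨ht, hl⟩, rfl⟩
  refine ⟨append_append_wordB_mem_blockLang ht _ (Or.inl (mem_pos_of_mem rfl)), ?_⟩
  simp only [List.length_append, length_wordA, length_wordB]
  omega

lemma blockLang_slice_bounds {j : ℕ} {r : ℝ} (hr1 : 1 ≤ r) (hr : r ^ (j + 2) = r + 1) :
    ∀ᶠ n in atTop,
      (r ^ (j * (j + 1) + j + 1) * r ^ (2 * j + 3))⁻¹ * r ^ n ≤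
          (({x ∈ blockLang j | x.length = n} : Set (List Bool)).ncard : ℝ) ∧
        (({x ∈ blockLang j | x.length = n} : Set (List Bool)).ncard : ℝ) ≤ 1 * r ^ n := by
  filter_upwards [eventually_ge_atTop (j * (j + 1) + (2 * j + 3))] with n hn
  have hfin := (blockWords_finite j n).subset (blockLang_slice_subset j n)
  constructor
  · have hinj : Function.Injective fun t => wordA j ++ t ++ wordB j := fun _ _ h => by
      simpa using h
    have hle := Set.ncard_le_ncard (image_blockWords_subset_blockLang_slice (j := j) (n := n)
      (by omega)) hfin
    rw [Set.ncard_image_of_injective _ hinj] at hle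
    calc _ = r ^ (n - (2 * j + 3)) / r ^ (j * (j + 1) + j + 1) := by
          rw [show r ^ n = r ^ (n - (2 * j + 3)) * r ^ (2 * j + 3) by
            rw [← pow_add, Nat.sub_add_cancel (by omega)]]
          field_simp
      _ ≤ _ := pow_div_le_ncard_blockWords hr1 hr (by omega)
      _ ≤ _ := by exact_mod_cast hle
  · rw [one_mul]
    exact (Nat.cast_le.mpr (Set.ncard_le_ncard (blockLang_slice_subset j n)
      (blockWords_finite j n))).trans (ncard_blockWords_le_pow hr1 hr n)

theorem stmt9 (k : ℕ) (hk : 1 ≤ k) (r : ℝ)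
    (hroot : r ^ (k + 1) - r - 1 = 0)
    (hmax : ∀ t : ℝ, t ^ (k + 1) - t - 1 = 0 → t ≤ r) :
    1 < r ∧
      cap (pos (cat (pos {List.replicate k false ++ [true]})
                    (pos {List.replicate (k - 1) false ++ [true]}))) =
        Real.logb 2 r := by
  obtain ⟨j, rfl⟩ : ∃ j, k = j + 1 := ⟨k - 1, by omega⟩
  have hr1 : 1 < r := one_lt_of_forall_root_le hmax
  have hr : r ^ (j + 2) = r + 1 := by linear_combination hroot
  refine ⟨hr1, Tendsto.limsup_eq ?_⟩
  exact tendsto_logb_div_of_le_of_le one_lt_two (by positivity) (by positivity)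
    (blockLang_slice_bounds hr1.le hr)
end

section
/- Let s ∈ Σ^k with s ≠ reverse(s). Then for the reversed-tandem-replication system S^rt_k(s), cap(S^rt_k(s)) ≥ 1/k. -/
open Filter

def RtStep {A : Type*} (k : ℕ) (x y : List A) : Prop :=
  ∃ u v w : List A, v.length = k ∧ x = u ++ v ++ w ∧ y = u ++ v ++ v.reverse ++ w

/-!
Encode a binary word as a concatenation of blocks, bit `false` giving `s` and bit `true` giving
`rev s`. Reverse-tandem-replicating a whole block of orientation `c` inserts a block of the opposite
orientation right after it, so starting from the single block `s` the system reaches the encoding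
of every binary word beginning with `01`. As `s ≠ rev s` the encoding is injective, so the system
has at least `2 ^ t` words of length `k (t + 2)`, which forces capacity at least `1 / k`.
-/

open Filter Topology

theorem le_limsup_of_tendsto_le_comp {ι κ : Type*} {l : Filter ι} {l' : Filter κ} [l.NeBot]
    {u : κ → ℝ} (hu : l'.IsBoundedUnder (· ≤ ·) u) {φ : ι → κ} (hφ : Tendsto φ l l')
    {g : ι → ℝ} {L : ℝ} (hg : Tendsto g l (𝓝 L)) (hgu : ∀ i, g i ≤ u (φ i)) :
    L ≤ limsup u l' :=
  le_of_forall_lt_imp_le_of_dense fun _ hc => le_limsup_of_frequently_le (hφ.frequently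
    ((hg.eventually (lt_mem_nhds hc)).mono fun i hi => hi.le.trans (hgu i)).frequently) hu

theorem Real.logb_natCast_le_logb_natCast {b : ℝ} (hb : 1 < b) {m n : ℕ} (h : m ≤ n) :
    Real.logb b m ≤ Real.logb b n := by
  rcases m.eq_zero_or_pos with rfl | hm
  · rw [Nat.cast_zero, Real.logb_zero]
    rcases n.eq_zero_or_pos with rfl | hn
    · simp
    · exact Real.logb_nonneg hb (Nat.one_le_cast.2 hn)
  · exact Real.logb_le_logb_of_le hb (by positivity) (by exact_mod_cast h)

section Capacity

variable {A : Type*}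

theorem ncard_length_eq_le [Fintype A] (S : Set (List A)) (n : ℕ) :
    {x ∈ S | x.length = n}.ncard ≤ Fintype.card A ^ n := by
  calc {x ∈ S | x.length = n}.ncard
      ≤ (Set.range (List.Vector.toList (α := A) (n := n))).ncard :=
        Set.ncard_le_ncard (fun x hx => ⟨⟨x, hx.2⟩, rfl⟩) (Set.finite_range _)
    _ = Fintype.card A ^ n := by
      rw [Set.ncard_range_of_injective List.Vector.toList_injective, Nat.card_eq_fintype_card,
        card_vector]

theorem isBoundedUnder_logb_ncard_length_eq_div [Fintype A] (S : Set (List A)) :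
    atTop.IsBoundedUnder (· ≤ ·)
      (fun n : ℕ => Real.logb 2 {x ∈ S | x.length = n}.ncard / n) := by
  refine isBoundedUnder_of ⟨Real.logb 2 (Fintype.card A), fun n => ?_⟩
  rcases n.eq_zero_or_pos with rfl | hn
  · simpa using Real.logb_natCast_le_logb_natCast one_lt_two (Nat.zero_le (Fintype.card A))
  rw [div_le_iff₀ (by positivity)]
  calc Real.logb 2 {x ∈ S | x.length = n}.ncard
      ≤ Real.logb 2 ((Fintype.card A ^ n : ℕ) : ℝ) :=
        Real.logb_natCast_le_logb_natCast one_lt_two (ncard_length_eq_le S n)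
    _ = Real.logb 2 (Fintype.card A) * n := by push_cast; rw [Real.logb_pow, mul_comm]

theorem le_cap_of_two_pow_le [Fintype A] {S : Set (List A)} {k m : ℕ} (hk : 0 < k)
    (h : ∀ t, 2 ^ t ≤ {x ∈ S | x.length = k * t + m}.ncard) : 1 / k ≤ cap S := by
  have hφ : Tendsto (fun t => k * t + m) atTop atTop :=
    tendsto_atTop_atTop.2 fun N => ⟨N, fun t ht => by nlinarith⟩
  have hg : Tendsto (fun t : ℕ => (t : ℝ) / (k * t + m)) atTop (𝓝 (1 / k)) := by
    convert (tendsto_natCast_div_add_atTop ((m : ℝ) / k)).const_mul (1 / k : ℝ) using 2 with t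
    · field_simp
    · simp
  refine le_limsup_of_tendsto_le_comp (isBoundedUnder_logb_ncard_length_eq_div S) hφ hg
    fun t => ?_
  push_cast
  refine div_le_div_of_nonneg_right ?_ (by positivity)
  simpa [Real.logb_pow] using Real.logb_natCast_le_logb_natCast one_lt_two (h t)

end Capacity

section Blocks

variable {A : Type*} (s : List A)

def orientedBlock (c : Bool) : List A := if c then s.reverse else s

def encodeBlocks (b : List Bool) : List A := b.flatMap (orientedBlock s)

variable {s}

@[simp]
theorem length_orientedBlock (c : Bool) : (orientedBlock s c).length = s.length := by
  cases c <;> simp [orientedBlock]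

theorem reverse_orientedBlock (c : Bool) : (orientedBlock s c).reverse = orientedBlock s !c := by
  cases c <;> simp [orientedBlock]

theorem orientedBlock_injective (hs : s ≠ s.reverse) : Function.Injective (orientedBlock s) := by
  intro c c' h
  cases c <;> cases c' <;> simp_all [orientedBlock, eq_comm]

theorem length_encodeBlocks (b : List Bool) : (encodeBlocks s b).length = s.length * b.length := by
  simp [encodeBlocks, List.length_flatMap, mul_comm]

theorem encodeBlocks_injective (hs : s ≠ s.reverse) : Function.Injective (encodeBlocks s) := by
  have hpos : 0 < s.length := List.length_pos_iff.2 fun h => hs (by simp [h])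
  intro b b' h
  have hlen : b.length = b'.length :=
    Nat.eq_of_mul_eq_mul_left hpos (by rw [← length_encodeBlocks, ← length_encodeBlocks, h])
  induction b generalizing b' with
  | nil => exact (List.length_eq_zero_iff.1 hlen.symm).symm
  | cons c b ih =>
    obtain _ | ⟨c', b'⟩ := b'
    · simp at hlen
    obtain ⟨hc, hb⟩ := List.append_inj h (by simp)
    rw [orientedBlock_injective hs hc, ih hb (by simpa using hlen)]

def BitInsert (b b' : List Bool) : Prop :=
  ∃ p q : List Bool, ∃ c : Bool, b = p ++ c :: q ∧ b' = p ++ c :: (!c) :: q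

theorem bitInsert_reflTransGen (q p : List Bool) (c : Bool) :
    Relation.ReflTransGen BitInsert (p ++ [c]) (p ++ c :: (!c) :: q) := by
  induction q generalizing p c with
  | nil => exact .single ⟨p, [], c, rfl, rfl⟩
  | cons d q ih =>
    rcases Bool.eq_or_eq_not d c with rfl | rfl
    · have hstep : BitInsert (p ++ [d]) ((p ++ [d]) ++ [!d]) := ⟨p, [], d, rfl, by simp⟩
      simpa using (Relation.ReflTransGen.single hstep).trans (ih (p ++ [d]) !d)
    · exact (ih p c).tail ⟨p, (!c) :: q, c, rfl, rfl⟩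

theorem rtStep_encodeBlocks {k : ℕ} (hs : s.length = k) {b b' : List Bool} (h : BitInsert b b') :
    RtStep k (encodeBlocks s b) (encodeBlocks s b') := by
  obtain ⟨p, q, c, rfl, rfl⟩ := h
  refine ⟨encodeBlocks s p, orientedBlock s c, encodeBlocks s q, by simp [hs], ?_, ?_⟩ <;>
    simp [encodeBlocks, reverse_orientedBlock]

theorem encodeBlocks_false_true_mem_sys {k : ℕ} (hs : s.length = k) (v : List Bool) :
    encodeBlocks s (false :: true :: v) ∈ Sys (RtStep k) s := by
  have hreach : Relation.ReflTransGen (RtStep k) (encodeBlocks s [false])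
      (encodeBlocks s (false :: true :: v)) :=
    Relation.ReflTransGen.lift (encodeBlocks s) (fun _ _ => rtStep_encodeBlocks hs) _ _
      (bitInsert_reflTransGen v [] false)
  simpa [Sys, encodeBlocks, orientedBlock] using hreach

theorem two_pow_le_ncard_sys_rtStep [Finite A] {k : ℕ} (hs : s.length = k)
    (hrev : s ≠ s.reverse) (t : ℕ) :
    2 ^ t ≤ {x ∈ Sys (RtStep k) s | x.length = k * t + 2 * k}.ncard := by
  have hlen (v : List.Vector Bool t) :
      (encodeBlocks s (false :: true :: v.toList)).length = k * t + 2 * k := by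
    simp only [length_encodeBlocks, hs, List.length_cons, List.Vector.toList_length]; ring
  calc 2 ^ t = (Set.univ : Set (List.Vector Bool t)).ncard := by simp [card_vector]
    _ ≤ _ := Set.ncard_le_ncard_of_injOn (fun v => encodeBlocks s (false :: true :: v.toList))
        (fun v _ => Set.mem_sep (encodeBlocks_false_true_mem_sys hs _) (hlen v))
        (fun _ _ _ _ h =>
          List.Vector.toList_injective (by simpa using encodeBlocks_injective hrev h))
        ((List.finite_length_eq A _).subset fun _ hx => hx.2)

end Blocks

theorem stmt10_general {A : Type*} [Fintype A] (k : ℕ)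
    (s : List A) (hs : s.length = k) (hrev : s ≠ s.reverse) :
    (1 : ℝ) / k ≤ cap (Sys (RtStep k) s) := by
  have hk : 0 < k := hs ▸ List.length_pos_iff.2 fun h => hrev (by simp [h])
  exact le_cap_of_two_pow_le hk (two_pow_le_ncard_sys_rtStep hs hrev)

theorem stmt10 {A : Type*} [Fintype A] [DecidableEq A] (k : ℕ)
    (s : List A) (hs : s.length = k) (hrev : s ≠ s.reverse) :
    (1 : ℝ) / k ≤ cap (Sys (RtStep k) s) :=
  stmt10_general k s hs hrev
end
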